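/- Let n ≥ 2, Σ, Σ_1, …, Σ_n ∈ S_+(d), p_1,…,p_n ∈ (0,1) with Σ_i p_i = 1. The inequality '∀ ξ ∈ R^d, √(ξ*Σξ) ≤ Σ_i p_i √(ξ*Σ_i ξ)' is equivalent to: for every skew-symmetric matrix M ∈ R^{n×n}, Σ ≤ Σ_{i=1}^n p_i Σ_{j=1}^n e^{M_{ij}} p_j Σ_i (inequality in the positive semi-definite order). -/

import Mathlib

open MeasureTheory ProbabilityTheory Matrix

noncomputable def stdGaussianPi (d : ℕ) : Measure (Fin d → ℝ) :=
  Measure.pi fun _ => gaussianReal 0 1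

/-- The square root of a positive semidefinite matrix, as defined in the older Mathlib
(`Matrix.PosSemidef.sqrt`, since removed). -/
noncomputable def Matrix.PosSemidef.sqrt {n 𝕜 : Type*} [Fintype n] [DecidableEq n] [RCLike 𝕜]
    [PartialOrder 𝕜] [StarOrderedRing 𝕜] {A : Matrix n n 𝕜} (hA : A.PosSemidef) : Matrix n n 𝕜 :=
  (hA.1.eigenvectorUnitary : Matrix n n 𝕜) *
    diagonal (fun i => ((Real.sqrt (hA.1.eigenvalues i) : ℝ) : 𝕜)) *
    (star hA.1.eigenvectorUnitary : Matrix n n 𝕜)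

/-- The Gaussian law `N_d(m, S)` on `ℝ^d`, defined as the image of the standard Gaussian
by `z ↦ m + S^{1/2} z`. -/
noncomputable def gaussianPi {d : ℕ} (m : Fin d → ℝ) {S : Matrix (Fin d) (Fin d) ℝ}
    (hS : S.PosSemidef) : Measure (Fin d → ℝ) :=
  Measure.map (fun z => m + hS.sqrt.mulVec z) (stdGaussianPi d)

/-- Convex order between measures: `μ ≤_cx ν`. -/
def ConvexOrder {E : Type*} [NormedAddCommGroup E] [NormedSpace ℝ E] [MeasurableSpace E]
    (μ ν : Measure E) : Prop :=
  ∀ φ : E → ℝ, ConvexOn ℝ Set.univ φ → Integrable φ μ → Integrable φ ν →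
    ∫ x, φ x ∂μ ≤ ∫ x, φ x ∂ν

/-!
For a fixed `ξ`, put `a i = √(ξ ⬝ᵥ Ss i *ᵥ ξ)`. The left side says `ξ ⬝ᵥ S *ᵥ ξ ≤ (∑ i, p i * a i)²`;
the right side, tested on `ξ`, says `ξ ⬝ᵥ S *ᵥ ξ ≤ ∑ i, (∑ j, p i * exp (M i j) * p j) * a i²` for
every skew `M`. They agree by the variational formula, valid for `a ≥ 0`,
`(∑ i, p i * a i)² = inf_{M skew} ∑ i, (∑ j, p i * exp (M i j) * p j) * a i²`.
The lower bound is AM-GM, `2xy ≤ t x² + t⁻¹ y²` with `t = exp (M i j)`, applied to each pair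
`(i, j)` and symmetrised using `M j i = -M i j`; the infimum is approached by
`M i j = log (a j + ε) - log (a i + ε)`.
-/

open Real

theorem two_mul_le_mul_sq_add_inv_mul_sq {t : ℝ} (ht : 0 < t) (x y : ℝ) :
    2 * (x * y) ≤ t * x ^ 2 + t⁻¹ * y ^ 2 := by
  have h : 0 ≤ t⁻¹ * (t * x - y) ^ 2 := by positivity
  have : t⁻¹ * (t * x - y) ^ 2 = t * x ^ 2 - 2 * (x * y) + t⁻¹ * y ^ 2 := by
    field_simp
    ring
  linarith

section Scalar

variable {ι : Type*} [Fintype ι]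

theorem sq_sum_mul_le_sum_exp_mul_sq {p : ι → ℝ} (hp : ∀ i, 0 ≤ p i) (a : ι → ℝ)
    {M : Matrix ι ι ℝ} (hM : Mᵀ = -M) :
    (∑ i, p i * a i) ^ 2 ≤ ∑ i, (∑ j, p i * exp (M i j) * p j) * a i ^ 2 := by
  have hterm : ∀ i j, 2 * (p i * a i * (p j * a j)) ≤
      p i * exp (M i j) * p j * a i ^ 2 + p j * exp (M j i) * p i * a j ^ 2 := by
    intro i j
    have hji : M j i = -M i j := by simpa using congrFun (congrFun hM i) j
    rw [hji, exp_neg]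
    have := mul_le_mul_of_nonneg_left
      (two_mul_le_mul_sq_add_inv_mul_sq (exp_pos (M i j)) (a i) (a j))
      (mul_nonneg (hp i) (hp j))
    linarith
  have hswap : ∑ i, ∑ j, p j * exp (M j i) * p i * a j ^ 2 =
      ∑ i, ∑ j, p i * exp (M i j) * p j * a i ^ 2 := Finset.sum_comm
  suffices 2 * (∑ i, p i * a i) ^ 2 ≤ 2 * ∑ i, (∑ j, p i * exp (M i j) * p j) * a i ^ 2 by
    linarith
  calc 2 * (∑ i, p i * a i) ^ 2 = ∑ i, ∑ j, 2 * (p i * a i * (p j * a j)) := by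
        rw [sq, Finset.sum_mul_sum, Finset.mul_sum]
        simp only [Finset.mul_sum]
    _ ≤ ∑ i, ∑ j, (p i * exp (M i j) * p j * a i ^ 2 + p j * exp (M j i) * p i * a j ^ 2) := by
        gcongr with i _ j _
        exact hterm i j
    _ = 2 * ∑ i, (∑ j, p i * exp (M i j) * p j) * a i ^ 2 := by
        simp only [Finset.sum_add_distrib, hswap, Finset.sum_mul]
        ring

theorem sum_exp_log_sub_mul (p b : ι → ℝ) {w : ι → ℝ} (hw : ∀ i, 0 < w i) :
    ∑ i, (∑ j, p i * exp (log (w j) - log (w i)) * p j) * b i =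
      (∑ j, p j * w j) * ∑ i, p i * (b i / w i) := by
  simp only [exp_sub, exp_log (hw _), Finset.mul_sum, Finset.sum_mul]
  refine Finset.sum_congr rfl fun j _ => Finset.sum_congr rfl fun i _ => ?_
  ring

theorem le_sq_sum_mul_of_forall_skew {p a : ι → ℝ} (hp : ∀ i, 0 ≤ p i) (hp1 : ∑ i, p i = 1)
    (ha : ∀ i, 0 ≤ a i) {c : ℝ}
    (h : ∀ M : Matrix ι ι ℝ, Mᵀ = -M → c ≤ ∑ i, (∑ j, p i * exp (M i j) * p j) * a i ^ 2) :
    c ≤ (∑ i, p i * a i) ^ 2 := by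
  have hs : 0 ≤ ∑ i, p i * a i := Finset.sum_nonneg fun i _ => mul_nonneg (hp i) (ha i)
  rw [← sqrt_le_left hs]
  refine le_of_forall_pos_le_add fun ε hε => ?_
  -- With `w = a + ε`, the skew matrix `M i j = log (w j) - log (w i)` nearly attains equality
  -- in every AM-GM step.
  set w := fun i => a i + ε
  have hw : ∀ i, 0 < w i := fun i => by positivity [ha i]
  have hpw : ∑ i, p i * w i = ∑ i, p i * a i + ε := by
    simp only [w, mul_add, Finset.sum_add_distrib, ← Finset.sum_mul, hp1, one_mul]
  have hratio : ∀ i, a i ^ 2 / w i ≤ w i := fun i => by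
    rw [div_le_iff₀ (hw i)]
    nlinarith [ha i]
  rw [sqrt_le_left (by positivity)]
  calc c ≤ ∑ i, (∑ j, p i * exp (log (w j) - log (w i)) * p j) * a i ^ 2 :=
        h (of fun i j => log (w j) - log (w i)) (by ext; simp)
    _ = (∑ j, p j * w j) * ∑ i, p i * (a i ^ 2 / w i) := sum_exp_log_sub_mul p _ hw
    _ ≤ (∑ j, p j * w j) * ∑ i, p i * w i := by
        gcongr with i
        · exact Finset.sum_nonneg fun j _ => mul_nonneg (hp j) (hw j).le
        · exact hp i
        · exact hratio i
    _ = (∑ i, p i * a i + ε) ^ 2 := by rw [hpw, sq]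

theorem le_sq_sum_mul_iff_forall_skew {p a : ι → ℝ} (hp : ∀ i, 0 ≤ p i) (hp1 : ∑ i, p i = 1)
    (ha : ∀ i, 0 ≤ a i) (c : ℝ) :
    c ≤ (∑ i, p i * a i) ^ 2 ↔
      ∀ M : Matrix ι ι ℝ, Mᵀ = -M → c ≤ ∑ i, (∑ j, p i * exp (M i j) * p j) * a i ^ 2 :=
  ⟨fun h _ hM => h.trans (sq_sum_mul_le_sum_exp_mul_sq hp a hM),
    le_sq_sum_mul_of_forall_skew hp hp1 ha⟩

end Scalar

section QuadraticForm

variable {ι n : Type*} [Fintype ι] [Fintype n]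

theorem dotProduct_sum_smul_mulVec {R : Type*} [CommSemiring R] (c : ι → R)
    (A : ι → Matrix n n R) (x : n → R) :
    x ⬝ᵥ (∑ i, c i • A i) *ᵥ x = ∑ i, c i * (x ⬝ᵥ A i *ᵥ x) := by
  simp only [sum_mulVec, dotProduct_sum, smul_mulVec, dotProduct_smul, smul_eq_mul]

theorem posSemidef_iff_forall_dotProduct_mulVec_nonneg {A : Matrix n n ℝ} (hA : A.IsHermitian) :
    A.PosSemidef ↔ ∀ x, 0 ≤ x ⬝ᵥ A *ᵥ x := by
  simp only [posSemidef_iff_dotProduct_mulVec, hA, true_and, star_trivial]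

end QuadraticForm

theorem stmt5_general {n d : ℕ}
    {S : Matrix (Fin d) (Fin d) ℝ} {Ss : Fin n → Matrix (Fin d) (Fin d) ℝ}
    (hS : S.PosSemidef) (hSs : ∀ i, (Ss i).PosSemidef)
    (p : Fin n → ℝ) (hp : ∀ i, p i ∈ Set.Ioo (0:ℝ) 1) (hp1 : ∑ i, p i = 1) :
    (∀ ξ : Fin d → ℝ,
        Real.sqrt (ξ ⬝ᵥ S.mulVec ξ) ≤ ∑ i, p i * Real.sqrt (ξ ⬝ᵥ (Ss i).mulVec ξ)) ↔
      ∀ M : Matrix (Fin n) (Fin n) ℝ, Mᵀ = -M →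
        ((∑ i, (∑ j, p i * Real.exp (M i j) * p j) • Ss i) - S).PosSemidef := by
  have hp0 : ∀ i, 0 ≤ p i := fun i => (hp i).1.le
  have hquad : ∀ (A : Matrix (Fin d) (Fin d) ℝ), A.PosSemidef → ∀ ξ, 0 ≤ ξ ⬝ᵥ A *ᵥ ξ :=
    fun A hA => (posSemidef_iff_forall_dotProduct_mulVec_nonneg hA.1).1 hA
  have hherm : ∀ M : Matrix (Fin n) (Fin n) ℝ,
      ((∑ i, (∑ j, p i * exp (M i j) * p j) • Ss i) - S).IsHermitian := fun M =>
    (isSelfAdjoint_sum _ fun i _ => (IsSelfAdjoint.all _).smul (hSs i).1).sub hS.1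
  calc _ ↔ ∀ ξ : Fin d → ℝ, ∀ M : Matrix (Fin n) (Fin n) ℝ, Mᵀ = -M →
        ξ ⬝ᵥ S *ᵥ ξ ≤ ∑ i, (∑ j, p i * exp (M i j) * p j) * (ξ ⬝ᵥ Ss i *ᵥ ξ) := by
        refine forall_congr' fun ξ => ?_
        rw [sqrt_le_left (Finset.sum_nonneg fun i _ => mul_nonneg (hp0 i) (sqrt_nonneg _)),
          le_sq_sum_mul_iff_forall_skew hp0 hp1 (fun _ => sqrt_nonneg _)]
        simp only [sq_sqrt (hquad _ (hSs _) ξ)]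
    _ ↔ _ := by
        rw [forall_comm]
        refine forall_congr' fun M => ?_
        simp only [posSemidef_iff_forall_dotProduct_mulVec_nonneg (hherm M), sub_mulVec,
          dotProduct_sub, dotProduct_sum_smul_mulVec, sub_nonneg]
        exact forall_comm

theorem stmt5 {n d : ℕ} (hn : 2 ≤ n)
    {S : Matrix (Fin d) (Fin d) ℝ} {Ss : Fin n → Matrix (Fin d) (Fin d) ℝ}
    (hS : S.PosSemidef) (hSs : ∀ i, (Ss i).PosSemidef)
    (p : Fin n → ℝ) (hp : ∀ i, p i ∈ Set.Ioo (0:ℝ) 1) (hp1 : ∑ i, p i = 1) :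
    (∀ ξ : Fin d → ℝ,
        Real.sqrt (ξ ⬝ᵥ S.mulVec ξ) ≤ ∑ i, p i * Real.sqrt (ξ ⬝ᵥ (Ss i).mulVec ξ)) ↔
      ∀ M : Matrix (Fin n) (Fin n) ℝ, Mᵀ = -M →
        ((∑ i, (∑ j, p i * Real.exp (M i j) * p j) • Ss i) - S).PosSemidef :=
  stmt5_general hS hSs p hp hp1
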